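/- arXiv:0910.1119 — 2 statements merged into one kernel-verified Lean document; each statement's English description precedes it below -/
import Mathlib

section
/- (Global maximizers lie in the sublevel set.) Assume X has full column rank p, the penalty p_{λₙ} : [0,∞) → ℝ is increasing with p_{λₙ}(0) = 0, and c < ℓₙ(0). Then for every γ ∈ ℝᵖ with ℓₙ(γ) = c and every t > 1, Qₙ(tγ) < Qₙ(γ). Consequently, every global maximizer of Qₙ over ℝᵖ lies in L_c = {β ∈ ℝᵖ : ℓₙ(β) ≥ c}. -/
open Matrix Set

noncomputable section

/-- GLM log-likelihood `ℓₙ(β) = n⁻¹[yᵀXβ − Σᵢ b((Xβ)ᵢ)]`. -/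
def ell (n p : ℕ) (X : Matrix (Fin n) (Fin p) ℝ) (y : Fin n → ℝ) (b : ℝ → ℝ)
    (β : Fin p → ℝ) : ℝ :=
  (n : ℝ)⁻¹ * ((∑ i, y i * X.mulVec β i) - ∑ i, b (X.mulVec β i))

/-- Penalized likelihood `Qₙ(β) = ℓₙ(β) − Σⱼ p_{λₙ}(|βⱼ|)` (here `pen = p_{λₙ}`). -/
def Qn (n p : ℕ) (X : Matrix (Fin n) (Fin p) ℝ) (y : Fin n → ℝ) (b : ℝ → ℝ)
    (pen : ℝ → ℝ) (β : Fin p → ℝ) : ℝ :=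
  ell n p X y b β - ∑ j, pen |β j|

/-!
Convexity of `b` makes `ℓₙ` concave. A concave function that has dropped from `ℓₙ(0)` to `ℓₙ(γ)`
along the ray through `γ` keeps dropping past `γ`, so `ℓₙ(tγ) < ℓₙ(γ)` for `t > 1`, while the
penalty can only grow when every `|γⱼ|` is scaled up. If a maximizer `β` had `ℓₙ(β) < c`, the
intermediate value theorem would give `s ∈ (0, 1)` with `ℓₙ(sβ) = c`, and then `Qₙ(β) < Qₙ(sβ)`.
-/

theorem convexOn_finset_sum {𝕜 E β ι : Type*} [Semiring 𝕜] [PartialOrder 𝕜]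
    [AddCommMonoid E] [AddCommMonoid β] [PartialOrder β] [IsOrderedAddMonoid β]
    [SMul 𝕜 E] [Module 𝕜 β] {s : Set E} {t : Finset ι} {f : ι → E → β}
    (hs : Convex 𝕜 s) (hf : ∀ i ∈ t, ConvexOn 𝕜 s (f i)) :
    ConvexOn 𝕜 s fun x => ∑ i ∈ t, f i x := by
  classical
  induction t using Finset.induction_on with
  | empty => simpa using convexOn_const (0 : β) hs
  | insert i t hi ih =>
    simp only [Finset.sum_insert hi]
    exact (hf i (t.mem_insert_self i)).add (ih fun j hj => hf j (Finset.mem_insert_of_mem hj))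

theorem ConcaveOn.apply_smul_lt_of_lt_apply_zero {E : Type*} [AddCommGroup E] [Module ℝ E]
    {f : E → ℝ} (hf : ConcaveOn ℝ univ f) {x : E} (hx : f x < f 0) {t : ℝ} (ht : 1 < t) :
    f (t • x) < f x := by
  have ht0 : 0 < t := by linarith
  have hx_mem : x ∈ openSegment ℝ 0 (t • x) :=
    ⟨1 - t⁻¹, t⁻¹, by simpa using inv_lt_one_of_one_lt₀ ht, by positivity, by ring, by
      rw [smul_zero, zero_add, smul_smul, inv_mul_cancel₀ ht0.ne', one_smul]⟩
  exact hf.lt_right_of_left_lt (mem_univ _) (mem_univ _) hx_mem hx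

theorem sum_apply_abs_le_sum_apply_abs_smul {ι : Type*} [Fintype ι] {pen : ℝ → ℝ}
    (hpen : MonotoneOn pen (Ici 0)) (g : ι → ℝ) {t : ℝ} (ht : 1 ≤ t) :
    ∑ j, pen |g j| ≤ ∑ j, pen |(t • g) j| := by
  refine Finset.sum_le_sum fun j _ =>
    hpen (mem_Ici.2 (abs_nonneg _)) (mem_Ici.2 (abs_nonneg _)) ?_
  rw [Pi.smul_apply, smul_eq_mul, abs_mul, abs_of_nonneg (zero_le_one.trans ht)]
  exact le_mul_of_one_le_left (abs_nonneg _) ht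

section GLM

variable {n p : ℕ} (X : Matrix (Fin n) (Fin p) ℝ) (y : Fin n → ℝ) {b : ℝ → ℝ}

theorem concaveOn_ell (hb : ConvexOn ℝ univ b) : ConcaveOn ℝ univ (ell n p X y b) := by
  have hlin : ConcaveOn ℝ univ fun β => ∑ i, y i * X.mulVec β i :=
    (dotProductBilin ℝ ℝ y ∘ₗ X.mulVecLin).concaveOn convex_univ
  have hsum : ConvexOn ℝ univ fun β => ∑ i, b (X.mulVec β i) :=
    convexOn_finset_sum convex_univ fun i _ =>
      preimage_univ ▸ hb.comp_linearMap (LinearMap.proj (R := ℝ) i ∘ₗ X.mulVecLin)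
  exact (hlin.sub hsum).smul (by positivity)

theorem continuous_ell (hb : Continuous b) : Continuous (ell n p X y b) := by
  unfold ell
  fun_prop

theorem Qn_smul_lt_of_ell_lt_ell_zero (hb : ConvexOn ℝ univ b) {pen : ℝ → ℝ}
    (hpen : MonotoneOn pen (Ici 0)) {g : Fin p → ℝ} (hg : ell n p X y b g < ell n p X y b 0)
    {t : ℝ} (ht : 1 < t) : Qn n p X y b pen (t • g) < Qn n p X y b pen g := by
  have hell := (concaveOn_ell X y hb).apply_smul_lt_of_lt_apply_zero hg ht
  have hpen_le := sum_apply_abs_le_sum_apply_abs_smul hpen g ht.le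
  unfold Qn
  linarith

theorem le_ell_of_isMaxOn_Qn (hb : ConvexOn ℝ univ b) (hb_cont : Continuous b) {pen : ℝ → ℝ}
    (hpen : MonotoneOn pen (Ici 0)) {c : ℝ} (hc : c < ell n p X y b 0) {β : Fin p → ℝ}
    (hβ : IsMaxOn (Qn n p X y b pen) univ β) : c ≤ ell n p X y b β := by
  by_contra! hlt
  obtain ⟨s, ⟨hs0, hs1⟩, hs⟩ : ∃ s ∈ Ioo (0 : ℝ) 1, ell n p X y b (s • β) = c :=
    intermediate_value_Ioo' zero_le_one
      ((continuous_ell X y hb_cont).comp (continuous_id.smul continuous_const)).continuousOn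
      (by simpa using And.intro hlt hc)
  have hQ := Qn_smul_lt_of_ell_lt_ell_zero X y hb hpen (hs ▸ hc) ((one_lt_inv₀ hs0).2 hs1)
  rw [smul_smul, inv_mul_cancel₀ hs0.ne', one_smul] at hQ
  exact (hβ (mem_univ _)).not_gt hQ

end GLM

theorem global_maximizers_in_sublevel_set_general
    (n p : ℕ)
    (X : Matrix (Fin n) (Fin p) ℝ) (y : Fin n → ℝ)
    (b : ℝ → ℝ) (hb : ContDiff ℝ 2 b)
    (hb'' : ∀ t : ℝ, 0 < iteratedDeriv 2 b t)
    (pen : ℝ → ℝ) (hpenmono : MonotoneOn pen (Set.Ici 0))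
    (c : ℝ) (hc : c < ell n p X y b 0) :
    (∀ g : Fin p → ℝ, ell n p X y b g = c → ∀ t : ℝ, 1 < t →
      Qn n p X y b pen (t • g) < Qn n p X y b pen g) ∧
    (∀ βh : Fin p → ℝ, IsMaxOn (Qn n p X y b pen) Set.univ βh → c ≤ ell n p X y b βh) := by
  have hconv : ConvexOn ℝ univ b :=
    (strictConvexOn_of_deriv2_pos convex_univ hb.continuous.continuousOn fun x _ => by
      simpa [← iteratedDeriv_eq_iterate] using hb'' x).convexOn
  exact ⟨fun g hg t ht => Qn_smul_lt_of_ell_lt_ell_zero X y hconv hpenmono (hg ▸ hc) ht,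
    fun βh hβh => le_ell_of_isMaxOn_Qn X y hconv hb.continuous hpenmono hc hβh⟩

/-- global maximizers of the penalized likelihood lie in the sublevel set. -/
theorem global_maximizers_in_sublevel_set
    (n p : ℕ) (hn : 1 ≤ n) (hp : 1 ≤ p)
    (X : Matrix (Fin n) (Fin p) ℝ) (y : Fin n → ℝ)
    (b : ℝ → ℝ) (hb : ContDiff ℝ 2 b)
    (hb'' : ∀ t : ℝ, 0 < iteratedDeriv 2 b t)
    (hrank : X.rank = p)
    (pen : ℝ → ℝ) (hpen0 : pen 0 = 0) (hpenmono : MonotoneOn pen (Set.Ici 0))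
    (c : ℝ) (hc : c < ell n p X y b 0) :
    (∀ g : Fin p → ℝ, ell n p X y b g = c → ∀ t : ℝ, 1 < t →
      Qn n p X y b pen (t • g) < Qn n p X y b pen g) ∧
    (∀ βh : Fin p → ℝ, IsMaxOn (Qn n p X y b pen) Set.univ βh → c ≤ ell n p X y b βh) :=
  global_maximizers_in_sublevel_set_general n p X y b hb hb'' pen hpenmono c hc

end
end

section
/- (Univariate SCAD penalized least-squares lemma.) Let c₀ > 0, λ > 0, a > 2, and β* ∈ ℝ with |β*| > (a + 1/(2c₀))λ. Then β* is the unique global minimizer over β ∈ ℝ of g(β) = (c₀/2)(β − β*)² + p_λ(|β|); that is, g(β) > g(β*) = p_λ(aλ) for every β ≠ β*. -/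
/-!
The SCAD penalty `p_λ` has derivative in `[0, λ]` and is constant on `[aλ, ∞)`, so for
`|β| < aλ` we have `p_λ(aλ) - p_λ(|β|) ≤ λ (aλ - |β|)`. Since `|β*| > aλ + λ/(2c₀)`, the fitting term
`(c₀/2)(β - β*)²` is at least `(c₀/2)(d + λ/(2c₀))²` with `d = aλ - |β|`, and this dominates
`λ d` by AM-GM.
-/

noncomputable section

/-- Derivative of the SCAD penalty: `p_λ′(u) = λ[1{u ≤ λ} + (aλ−u)₊/((a−1)λ)·1{u > λ}]`. -/
def scadDeriv (l a u : ℝ) : ℝ :=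
  l * ((if u ≤ l then 1 else 0) + max (a * l - u) 0 / ((a - 1) * l) * (if l < u then 1 else 0))

/-- The SCAD penalty `p_λ(t) = ∫₀ᵗ p_λ′(u) du`. -/
def scad (l a t : ℝ) : ℝ := ∫ u in (0:ℝ)..t, scadDeriv l a u

open MeasureTheory

section ScadDeriv

variable {l a : ℝ}

lemma scadDeriv_nonneg (hl : 0 ≤ l) (ha : 1 ≤ a) (u : ℝ) : 0 ≤ scadDeriv l a u := by
  have hden : 0 ≤ (a - 1) * l := mul_nonneg (by linarith) hl
  unfold scadDeriv
  have := div_nonneg (le_max_right (a * l - u) 0) hden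
  positivity

lemma scadDeriv_le (hl : 0 ≤ l) (ha : 1 ≤ a) (u : ℝ) : scadDeriv l a u ≤ l := by
  have hden : 0 ≤ (a - 1) * l := mul_nonneg (by linarith) hl
  unfold scadDeriv
  by_cases hu : u ≤ l
  · simp [hu, not_lt.2 hu]
  · have hfrac : max (a * l - u) 0 / ((a - 1) * l) ≤ 1 :=
      div_le_one_of_le₀ (max_le (by linarith) hden) hden
    simpa [hu, not_le.1 hu] using mul_le_of_le_one_right hl hfrac

lemma scadDeriv_eq_zero (hl : 0 < l) (ha : 1 < a) {u : ℝ} (hu : a * l ≤ u) :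
    scadDeriv l a u = 0 := by
  have hlu : l < u := by nlinarith
  simp [scadDeriv, not_le.2 hlu, hlu, hu]

lemma measurable_scadDeriv : Measurable (scadDeriv l a) := by
  have h_le : Measurable fun u : ℝ => if u ≤ l then (1 : ℝ) else 0 :=
    Measurable.ite measurableSet_Iic measurable_const measurable_const
  have h_lt : Measurable fun u : ℝ => if l < u then (1 : ℝ) else 0 :=
    Measurable.ite measurableSet_Ioi measurable_const measurable_const
  have h_ramp : Measurable fun u : ℝ => max (a * l - u) 0 / ((a - 1) * l) :=
    ((measurable_const.sub measurable_id).max measurable_const).div_const _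
  exact measurable_const.mul (h_le.add (h_ramp.mul h_lt))

lemma intervalIntegrable_scadDeriv (hl : 0 ≤ l) (ha : 1 ≤ a) (x y : ℝ) :
    IntervalIntegrable (scadDeriv l a) volume x y := by
  refine (intervalIntegrable_const (c := l)).mono_fun' measurable_scadDeriv.aestronglyMeasurable
    (Filter.Eventually.of_forall fun u => ?_)
  simpa only [Real.norm_of_nonneg (scadDeriv_nonneg hl ha u)] using scadDeriv_le hl ha u

end ScadDeriv

section Scad

variable {l a : ℝ}

lemma scad_sub_scad (hl : 0 ≤ l) (ha : 1 ≤ a) (s t : ℝ) :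
    scad l a s - scad l a t = ∫ u in t..s, scadDeriv l a u :=
  intervalIntegral.integral_interval_sub_left (intervalIntegrable_scadDeriv hl ha 0 s)
    (intervalIntegrable_scadDeriv hl ha 0 t)

lemma scad_eq_of_le (hl : 0 < l) (ha : 1 < a) {t : ℝ} (ht : a * l ≤ t) :
    scad l a t = scad l a (a * l) := by
  rw [← sub_eq_zero, scad_sub_scad hl.le ha.le]
  refine (intervalIntegral.integral_congr fun u hu => ?_).trans intervalIntegral.integral_zero
  rw [Set.uIcc_of_le ht] at hu
  exact scadDeriv_eq_zero hl ha hu.1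

lemma scad_sub_le (hl : 0 ≤ l) (ha : 1 ≤ a) {s t : ℝ} (hts : t ≤ s) :
    scad l a s - scad l a t ≤ l * (s - t) := by
  rw [scad_sub_scad hl ha]
  calc (∫ u in t..s, scadDeriv l a u) ≤ ∫ _ in t..s, l :=
        intervalIntegral.integral_mono_on hts (intervalIntegrable_scadDeriv hl ha t s)
          intervalIntegrable_const fun u _ => scadDeriv_le hl ha u
    _ = l * (s - t) := by simp [mul_comm]

end Scad

lemma mul_lt_half_mul_sq_of_add_div_lt_abs {c l d x : ℝ} (hc : 0 < c) (hl : 0 ≤ l)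
    (hd : 0 ≤ d) (hx : d + l / (2 * c) < |x|) : l * d < c / 2 * x ^ 2 := by
  have hamgm : l * d ≤ c / 2 * (d + l / (2 * c)) ^ 2 := by
    have hsq : c / 2 * (d + l / (2 * c)) ^ 2 - l * d = c / 2 * (d - l / (2 * c)) ^ 2 := by
      field_simp
      ring
    rw [← sub_nonneg, hsq]
    positivity
  have hsq : (d + l / (2 * c)) ^ 2 < x ^ 2 := by
    rw [← sq_abs x]
    exact pow_lt_pow_left₀ hx (by positivity) two_ne_zero
  nlinarith

/-- univariate SCAD penalized least-squares lemma. -/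
theorem scad_univariate_pls
    (c₀ l a : ℝ) (hc₀ : 0 < c₀) (hl : 0 < l) (ha : 2 < a)
    (βstar : ℝ) (hβstar : (a + 1 / (2 * c₀)) * l < |βstar|) :
    (∀ β : ℝ, β ≠ βstar →
      c₀ / 2 * (βstar - βstar) ^ 2 + scad l a |βstar| < c₀ / 2 * (β - βstar) ^ 2 + scad l a |β|) ∧
    c₀ / 2 * (βstar - βstar) ^ 2 + scad l a |βstar| = scad l a (a * l) := by
  have ha₁ : 1 < a := by linarith
  have hgap : a * l + l / (2 * c₀) < |βstar| := by
    convert hβstar using 1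
    ring
  have hstar : scad l a |βstar| = scad l a (a * l) :=
    scad_eq_of_le hl ha₁ (by linarith [show 0 < l / (2 * c₀) by positivity])
  simp only [sub_self, hstar]
  refine ⟨fun β hβ => ?_, by ring⟩
  rcases le_or_gt (a * l) |β| with hβ_far | hβ_near
  · have hsq : 0 < (β - βstar) ^ 2 := by
      have := sub_ne_zero.2 hβ
      positivity
    rw [scad_eq_of_le hl ha₁ hβ_far]
    nlinarith
  · have hpen := scad_sub_le hl.le ha₁.le hβ_near.le
    have hdist : a * l - |β| + l / (2 * c₀) < |β - βstar| := by
      linarith [abs_sub_abs_le_abs_sub βstar β, abs_sub_comm β βstar]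
    have hfit := mul_lt_half_mul_sq_of_add_div_lt_abs hc₀ hl.le (by linarith) hdist
    linarith

end
end
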